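/- Let (X,d) be a metric space containing at least two points that is uniformly perfect with constant C ≥ 1, let μ be a doubling measure on X with constant D ≥ 1, and let s > 0. Then there exists a constant C₄ ≥ 1 such that for every x ∈ X and every ρ > 0 for which the quasimetric ball β[x,ρ] = {y ∈ X : q_{μ,s}(x,y) ≤ ρ} is not all of X, one has (1/C₄) · ρ^{1/s} ≤ μ(β[x,ρ]) ≤ C₄ · ρ^{1/s}. In other words, μ is Ahlfors (1/s)-regular with respect to the quasimetric q_{μ,s}. -/

import Mathlib

open MeasureTheory Metric

/-- `(X,d)` is uniformly perfect with constant `C`. -/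
def UniformlyPerfect (X : Type*) [MetricSpace X] (C : ℝ) : Prop :=
  ∀ (x : X) (r : ℝ), 0 < r → ENNReal.ofReal r ≤ EMetric.diam (Set.univ : Set X) →
    ∃ y : X, r / C ≤ dist x y ∧ dist x y ≤ r

/-- `μ` is a doubling measure with constant `D` on the metric space `X`. -/
def IsDoublingMeasure {X : Type*} [MetricSpace X] [MeasurableSpace X]
    (μ : Measure X) (D : ℝ) : Prop :=
  (∀ (x : X) (r : ℝ), 0 < r → 0 < μ (closedBall x r) ∧ μ (closedBall x r) < ⊤) ∧
    ∀ (x : X) (r : ℝ), 0 < r →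
      μ (closedBall x (2 * r)) ≤ ENNReal.ofReal D * μ (closedBall x r)

open Classical in
/-- The quasimetric `q_{μ,s}` associated to a metric measure space. -/
noncomputable def qms {X : Type*} [MetricSpace X] [MeasurableSpace X]
    (μ : Measure X) (s : ℝ) (x y : X) : ℝ :=
  if x = y then 0
  else ((μ (closedBall x (dist x y)) + μ (closedBall y (dist x y))).toReal) ^ s

/-! Write `τ = ρ ^ (1 / s)`. For `y ≠ x` the condition `q(x, y) ≤ ρ` says exactly
`μ B[x, d] + μ B[y, d] ≤ τ` with `d = dist x y`.

Lower bound: `β[x, ρ]` contains every ball `B[x, r]` with `2 μ B[x, 2r] ≤ τ`. Such radii exist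
because a doubling measure on a uniformly perfect space has no atoms: near `x` there is a point `y`
whose small ball is disjoint from that of `x` yet, by doubling, has measure comparable to `μ {x}`.
If `τ > 2 D² μ β` the condition would propagate from `r` to `2r` by doubling, forcing `β = X`.

Upper bound: every `y ∈ β` has `μ B[x, dist x y] ≤ τ`, and `β ⊆ B[x, 2 dist x y]` for a `y ∈ β`
of almost maximal distance from `x` (or `β` is unbounded and `μ X ≤ τ`), so `μ β ≤ D τ`. -/

open Filter Topology Set
open scoped ENNReal

namespace IsDoublingMeasure

variable {X : Type*} [MetricSpace X] [MeasurableSpace X] {μ : Measure X} {D : ℝ}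

lemma measure_closedBall_ne_top (hμ : IsDoublingMeasure μ D) (x : X) {r : ℝ} (hr : 0 < r) :
    μ (closedBall x r) ≠ ∞ :=
  (hμ.1 x r hr).2.ne

lemma measure_closedBall_two_pow_mul_le (hμ : IsDoublingMeasure μ D) (x : X) {r : ℝ}
    (hr : 0 < r) (k : ℕ) :
    μ (closedBall x (2 ^ k * r)) ≤ ENNReal.ofReal D ^ k * μ (closedBall x r) := by
  induction k with
  | zero => simp
  | succ k ih =>
    calc μ (closedBall x (2 ^ (k + 1) * r)) = μ (closedBall x (2 * (2 ^ k * r))) := by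
          rw [pow_succ', mul_assoc]
      _ ≤ ENNReal.ofReal D * μ (closedBall x (2 ^ k * r)) := hμ.2 x _ (by positivity)
      _ ≤ ENNReal.ofReal D * (ENNReal.ofReal D ^ k * μ (closedBall x r)) := by gcongr
      _ = ENNReal.ofReal D ^ (k + 1) * μ (closedBall x r) := by ring

lemma measure_closedBall_two_mul_le (hμ : IsDoublingMeasure μ D) (hD : 1 ≤ D) (x : X) {r : ℝ}
    (hr : 0 ≤ r) : μ (closedBall x (2 * r)) ≤ ENNReal.ofReal D * μ (closedBall x r) := by
  rcases hr.eq_or_lt with rfl | hr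
  · rw [mul_zero]
    exact le_mul_of_one_le_left' (ENNReal.one_le_ofReal.2 hD)
  · exact hμ.2 x r hr

lemma tendsto_measure_closedBall [OpensMeasurableSpace X] (hμ : IsDoublingMeasure μ D) (x : X) :
    Tendsto (fun r => μ (closedBall x r)) (𝓝[>] 0) (𝓝 (μ {x})) := by
  have h := tendsto_measure_biInter_gt (μ := μ) (s := closedBall x) (a := (0 : ℝ))
    (fun _ _ => measurableSet_closedBall.nullMeasurableSet)
    (fun _ _ _ hij => closedBall_subset_closedBall hij)
    ⟨1, one_pos, hμ.measure_closedBall_ne_top x one_pos⟩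
  rwa [biInter_gt_closedBall, closedBall_zero] at h

lemma measure_singleton_add_div_le [OpensMeasurableSpace X] (hμ : IsDoublingMeasure μ D)
    {C : ℝ} (hC : 1 ≤ C) (hup : UniformlyPerfect X C) {m : ℕ} (hm : 4 * C ≤ 2 ^ m) (x : X)
    {r : ℝ} (hr : 0 < r) (hdiam : ENNReal.ofReal r ≤ ediam (univ : Set X)) :
    μ {x} + μ {x} / ENNReal.ofReal D ^ m ≤ μ (closedBall x r) := by
  obtain ⟨y, hy_ge, hy_le⟩ := hup x (r / 2) (by positivity)
    ((ENNReal.ofReal_le_ofReal (by linarith)).trans hdiam)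
  have hC0 : 0 < C := by linarith
  set δ := r / (8 * C) with hδ_def
  have hδ : 0 < δ := by positivity
  have hδr : δ ≤ r / 2 := by
    rw [hδ_def, div_le_div_iff₀ (by positivity) two_pos]; nlinarith
  have hdisj : Disjoint (closedBall x δ) (closedBall y δ) := by
    refine closedBall_disjoint_closedBall (lt_of_lt_of_le ?_ hy_ge)
    rw [hδ_def, div_div, ← add_div, div_lt_div_iff₀ (by positivity) (by positivity)]
    nlinarith
  have hsub : closedBall x δ ∪ closedBall y δ ⊆ closedBall x r :=
    union_subset (closedBall_subset_closedBall (by linarith))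
      (closedBall_subset_closedBall' (by rw [dist_comm]; linarith))
  have hx : μ {x} ≤ ENNReal.ofReal D ^ m * μ (closedBall y δ) := by
    refine le_trans (measure_mono (singleton_subset_iff.2 (mem_closedBall.2 ?_)))
      (hμ.measure_closedBall_two_pow_mul_le y hδ m)
    refine hy_le.trans ?_
    rw [hδ_def, ← mul_div_assoc, le_div_iff₀ (by positivity)]
    nlinarith
  calc μ {x} + μ {x} / ENNReal.ofReal D ^ m ≤ μ (closedBall x δ) + μ (closedBall y δ) :=
        add_le_add (measure_mono (singleton_subset_iff.2 (mem_closedBall_self hδ.le)))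
          (ENNReal.div_le_of_le_mul' hx)
    _ = μ (closedBall x δ ∪ closedBall y δ) := (measure_union hdisj measurableSet_closedBall).symm
    _ ≤ μ (closedBall x r) := measure_mono hsub

theorem measure_singleton_eq_zero [Nontrivial X] [OpensMeasurableSpace X]
    (hμ : IsDoublingMeasure μ D) {C : ℝ} (hC : 1 ≤ C) (hup : UniformlyPerfect X C) (x : X) :
    μ {x} = 0 := by
  obtain ⟨m, hm⟩ := pow_unbounded_of_one_lt (4 * C) one_lt_two
  obtain ⟨a, b, hab⟩ := exists_pair_ne X
  have hdiam : ENNReal.ofReal (dist a b) ≤ ediam (univ : Set X) := by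
    rw [← edist_dist]
    exact edist_le_ediam_of_mem trivial trivial
  have hle : μ {x} + μ {x} / ENNReal.ofReal D ^ m ≤ μ {x} := by
    refine ge_of_tendsto (hμ.tendsto_measure_closedBall x) ?_
    filter_upwards [Ioo_mem_nhdsGT (dist_pos.2 hab)] with r hr
    exact hμ.measure_singleton_add_div_le hC hup hm.le x hr.1
      ((ENNReal.ofReal_le_ofReal hr.2.le).trans hdiam)
  have hfin : μ {x} ≠ ∞ := ne_top_of_le_ne_top (hμ.measure_closedBall_ne_top x one_pos)
    (measure_mono (singleton_subset_iff.2 (mem_closedBall_self zero_le_one)))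
  have hdiv : μ {x} / ENNReal.ofReal D ^ m ≤ 0 :=
    (ENNReal.add_le_add_iff_left hfin).1 (by rwa [add_zero])
  simpa [ENNReal.div_eq_zero_iff, ENNReal.pow_ne_top] using hdiv

lemma exists_two_mul_measure_closedBall_le [OpensMeasurableSpace X]
    (hμ : IsDoublingMeasure μ D) {x : X} (hx : μ {x} = 0) {c : ℝ≥0∞} (hc : 0 < c) :
    ∃ r > 0, 2 * μ (closedBall x (2 * r)) ≤ c := by
  have h := ENNReal.Tendsto.const_mul (a := 2) (hμ.tendsto_measure_closedBall x)
    (Or.inr ENNReal.ofNat_ne_top)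
  rw [hx, mul_zero] at h
  obtain ⟨r, hrc, hr⟩ := ((h.eventually (gt_mem_nhds hc)).and self_mem_nhdsWithin).exists
  exact ⟨r / 2, half_pos hr, by rw [mul_div_cancel₀ r two_ne_zero]; exact hrc.le⟩

lemma le_mul_measure_of_closedBall_subset (hμ : IsDoublingMeasure μ D) {x : X} {c : ℝ≥0∞}
    {S : Set X} (hS : S ≠ univ)
    (hsub : ∀ r, 0 < r → 2 * μ (closedBall x (2 * r)) ≤ c → closedBall x r ⊆ S)
    {r₀ : ℝ} (hr₀ : 0 < r₀) (h₀ : 2 * μ (closedBall x (2 * r₀)) ≤ c) :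
    c ≤ 2 * ENNReal.ofReal D ^ 2 * μ S := by
  by_contra! hlt
  have hgrow : ∀ n : ℕ, 2 * μ (closedBall x (2 * (2 ^ n * r₀))) ≤ c := by
    intro n
    induction n with
    | zero => simpa using h₀
    | succ n ih =>
      have hr : 0 < 2 ^ n * r₀ := by positivity
      calc 2 * μ (closedBall x (2 * (2 ^ (n + 1) * r₀)))
          = 2 * μ (closedBall x (2 ^ 2 * (2 ^ n * r₀))) := by ring_nf
        _ ≤ 2 * (ENNReal.ofReal D ^ 2 * μ (closedBall x (2 ^ n * r₀))) := by
          gcongr; exact hμ.measure_closedBall_two_pow_mul_le x hr 2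
        _ ≤ 2 * (ENNReal.ofReal D ^ 2 * μ S) := by gcongr; exact hsub _ hr ih
        _ ≤ c := by rw [← mul_assoc]; exact hlt.le
  refine hS (eq_univ_of_forall fun z => ?_)
  obtain ⟨n, hn⟩ := pow_unbounded_of_one_lt (dist z x / r₀) one_lt_two
  exact hsub _ (by positivity) (hgrow n) (mem_closedBall.2 ((div_lt_iff₀ hr₀).1 hn).le)

lemma measure_le_of_forall_measure_closedBall_dist_le (hμ : IsDoublingMeasure μ D) (hD : 1 ≤ D)
    {x : X} {c : ℝ≥0∞} {S : Set X} (hS : ∀ y ∈ S, μ (closedBall x (dist x y)) ≤ c) :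
    μ S ≤ ENNReal.ofReal D * c := by
  by_cases hbdd : BddAbove (dist x '' S)
  · rcases S.eq_empty_or_nonempty with rfl | ⟨y₀, hy₀⟩
    · simp
    obtain ⟨y, hy, hRy⟩ : ∃ y ∈ S, sSup (dist x '' S) ≤ 2 * dist x y := by
      rcases le_or_gt (sSup (dist x '' S)) 0 with hR | hR
      · exact ⟨y₀, hy₀, hR.trans (by positivity)⟩
      · obtain ⟨_, ⟨y, hy, rfl⟩, hlt⟩ := exists_lt_of_lt_csSup ⟨_, mem_image_of_mem _ hy₀⟩
          (half_lt_self hR)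
        exact ⟨y, hy, by linarith⟩
    calc μ S ≤ μ (closedBall x (2 * dist x y)) :=
          measure_mono fun z hz => mem_closedBall'.2 ((le_csSup hbdd ⟨z, hz, rfl⟩).trans hRy)
      _ ≤ ENNReal.ofReal D * μ (closedBall x (dist x y)) :=
          hμ.measure_closedBall_two_mul_le hD x dist_nonneg
      _ ≤ ENNReal.ofReal D * c := by gcongr; exact hS y hy
  · have huniv : μ univ ≤ c := by
      rw [← iUnion_closedBall_nat x,
        Monotone.measure_iUnion fun i j h => closedBall_subset_closedBall (Nat.cast_le.2 h)]
      refine iSup_le fun n => ?_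
      obtain ⟨_, ⟨y, hy, rfl⟩, hn⟩ := not_bddAbove_iff.1 hbdd n
      exact (measure_mono (closedBall_subset_closedBall hn.le)).trans (hS y hy)
    calc μ S ≤ μ univ := measure_mono (subset_univ S)
      _ ≤ c := huniv
      _ ≤ ENNReal.ofReal D * c := le_mul_of_one_le_left' (ENNReal.one_le_ofReal.2 hD)

end IsDoublingMeasure

section Quasimetric

variable {X : Type*} [MetricSpace X] [MeasurableSpace X] {μ : Measure X} {D s ρ : ℝ}

lemma qms_le_iff (hμ : IsDoublingMeasure μ D) (hs : 0 < s) (hρ : 0 ≤ ρ) {x y : X} (hxy : x ≠ y) :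
    qms μ s x y ≤ ρ ↔
      μ (closedBall x (dist x y)) + μ (closedBall y (dist x y)) ≤ ENNReal.ofReal (ρ ^ (1 / s)) := by
  have hd := dist_pos.2 hxy
  rw [qms, if_neg hxy, ENNReal.le_ofReal_iff_toReal_le
    (ENNReal.add_ne_top.2 ⟨hμ.measure_closedBall_ne_top x hd, hμ.measure_closedBall_ne_top y hd⟩)
    (by positivity), one_div, Real.le_rpow_inv_iff_of_pos ENNReal.toReal_nonneg hρ hs]

lemma closedBall_subset_setOf_qms_le (hμ : IsDoublingMeasure μ D) (hs : 0 < s) (hρ : 0 ≤ ρ)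
    {x : X} {r : ℝ} (h : 2 * μ (closedBall x (2 * r)) ≤ ENNReal.ofReal (ρ ^ (1 / s))) :
    closedBall x r ⊆ {y | qms μ s x y ≤ ρ} := by
  intro y hy
  rcases eq_or_ne x y with rfl | hxy
  · simpa [qms] using hρ
  have hd : dist x y ≤ r := mem_closedBall'.1 hy
  refine (qms_le_iff hμ hs hρ hxy).2 (le_trans ?_ h)
  rw [two_mul]
  gcongr
  · linarith [(dist_nonneg : 0 ≤ dist x y)]
  · exact closedBall_subset_closedBall' (by rw [dist_comm y x]; linarith)

lemma measure_closedBall_dist_le_of_qms_le (hμ : IsDoublingMeasure μ D) (hs : 0 < s) (hρ : 0 ≤ ρ)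
    {x y : X} (hx : μ {x} = 0) (hy : qms μ s x y ≤ ρ) :
    μ (closedBall x (dist x y)) ≤ ENNReal.ofReal (ρ ^ (1 / s)) := by
  rcases eq_or_ne x y with rfl | hxy
  · simp [hx]
  · exact le_self_add.trans ((qms_le_iff hμ hs hρ hxy).1 hy)

end Quasimetric

theorem stmt10 {X : Type*} [MetricSpace X] [Nontrivial X]
    [MeasurableSpace X] [BorelSpace X]
    (C : ℝ) (hC : 1 ≤ C) (hup : UniformlyPerfect X C)
    (μ : Measure X) (D : ℝ) (hD : 1 ≤ D) (hμ : IsDoublingMeasure μ D)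
    (s : ℝ) (hs : 0 < s) :
    ∃ C₄ : ℝ, 1 ≤ C₄ ∧
      ∀ (x : X) (ρ : ℝ), 0 < ρ → {y : X | qms μ s x y ≤ ρ} ≠ Set.univ →
        ENNReal.ofReal (ρ ^ (1 / s) / C₄) ≤ μ {y : X | qms μ s x y ≤ ρ} ∧
          μ {y : X | qms μ s x y ≤ ρ} ≤ ENNReal.ofReal (C₄ * ρ ^ (1 / s)) := by
  refine ⟨2 * D ^ 2, by nlinarith, fun x ρ hρ hne => ?_⟩
  have hatom : μ {x} = 0 := hμ.measure_singleton_eq_zero hC hup x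
  have hτ : 0 < ρ ^ (1 / s) := by positivity
  have hC₄ : ENNReal.ofReal (2 * D ^ 2) = 2 * ENNReal.ofReal D ^ 2 := by
    rw [ENNReal.ofReal_mul zero_le_two, ENNReal.ofReal_pow (by linarith), ENNReal.ofReal_ofNat]
  constructor
  · obtain ⟨r₀, hr₀, h₀⟩ := hμ.exists_two_mul_measure_closedBall_le hatom (ENNReal.ofReal_pos.2 hτ)
    have hlower := hμ.le_mul_measure_of_closedBall_subset hne
      (fun _ _ => closedBall_subset_setOf_qms_le hμ hs hρ.le) hr₀ h₀
    rw [ENNReal.ofReal_div_of_pos (by positivity), hC₄]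
    exact ENNReal.div_le_of_le_mul' hlower
  · calc μ {y | qms μ s x y ≤ ρ} ≤ ENNReal.ofReal D * ENNReal.ofReal (ρ ^ (1 / s)) :=
          hμ.measure_le_of_forall_measure_closedBall_dist_le hD fun _ hy =>
            measure_closedBall_dist_le_of_qms_le hμ hs hρ.le hatom hy
      _ = ENNReal.ofReal (D * ρ ^ (1 / s)) := (ENNReal.ofReal_mul (by linarith)).symm
      _ ≤ ENNReal.ofReal (2 * D ^ 2 * ρ ^ (1 / s)) :=
          ENNReal.ofReal_le_ofReal (by gcongr; nlinarith)
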